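/- arXiv:1609.02122 — 5 statements merged into one kernel-verified Lean document; each statement's English description precedes it below -/
import Mathlib

section
/- Let M ≥ 1 and let α be a sequence with α_n ≠ 0 for infinitely many n and σ^n(α) ≼ α for every n ≥ 1 with α_n < M (i.e., α is the quasi-greedy expansion of 1 in some base q ∈ (1, M+1]). Then V_α ≠ ∅ if and only if γ ≼ α, where γ := k^∞ if M = 2k and γ := ((k+1)k)^∞ if M = 2k+1. (Equivalently: 𝐕_q ≠ ∅ iff q ∈ [q_G, M+1], where q_G is the generalized golden ratio, whose quasi-greedy expansion of 1 is γ.) -/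
namespace Paper

/-- A digit sequence over the alphabet `{0,…,M}` (0-indexed: `x 0` is the digit `x_1`). -/
def IsSeq (M : ℕ) (x : ℕ → ℕ) : Prop := ∀ i, x i ≤ M

/-- The `n`-fold left shift `σ^n`. -/
def shiftn (n : ℕ) (x : ℕ → ℕ) : ℕ → ℕ := fun i => x (i + n)

/-- Reflection of a sequence: `x̄ = (M - x_i)_i`. -/
def reflectSeq (M : ℕ) (x : ℕ → ℕ) : ℕ → ℕ := fun i => M - x i

/-- Strict lexicographic order on sequences. -/
def SeqLt (x y : ℕ → ℕ) : Prop := ∃ n, (∀ i < n, x i = y i) ∧ x n < y n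

/-- Lexicographic order on sequences. -/
def SeqLe (x y : ℕ → ℕ) : Prop := SeqLt x y ∨ x = y

/-- Reflection of a word. -/
def reflectWord (M : ℕ) (w : List ℕ) : List ℕ := w.map (fun d => M - d)

/-- `w⁻`: decrement the last letter of a word. -/
def wordMinus (w : List ℕ) : List ℕ := w.dropLast ++ [w.getLastD 0 - 1]

/-- `w⁺`: increment the last letter of a word. -/
def wordPlus (w : List ℕ) : List ℕ := w.dropLast ++ [w.getLastD 0 + 1]

/-- The periodic sequence `w^∞`. -/
def per (w : List ℕ) : ℕ → ℕ := fun i => w.getD (i % w.length) 0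

/-- The sequence starting with the word `w` followed by the sequence `x`. -/
def wordThen (w : List ℕ) (x : ℕ → ℕ) : ℕ → ℕ :=
  fun i => if i < w.length then w.getD i 0 else x (i - w.length)

/-- The factor `x_{i+1} … x_{i+n}` of a sequence (0-indexed start `i`, length `n`). -/
def factor (x : ℕ → ℕ) (i n : ℕ) : List ℕ := (List.range n).map (fun j => x (i + j))

/-- The prefix `x_1 … x_n` of a sequence. -/
def pre (x : ℕ → ℕ) (n : ℕ) : List ℕ := factor x 0 n

/-- The set `𝐕` of sequences `a` with `ā ≼ σⁿ(a) ≼ a` for all `n ≥ 0`. -/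
def Vset (M : ℕ) : Set (ℕ → ℕ) :=
  {a | IsSeq M a ∧ ∀ n, SeqLe (reflectSeq M a) (shiftn n a) ∧ SeqLe (shiftn n a) a}

/-- The subshift `V_α` of sequences `x` with `ᾱ ≼ σⁿ(x) ≼ α` for all `n ≥ 0`. -/
def Vsub (M : ℕ) (α : ℕ → ℕ) : Set (ℕ → ℕ) :=
  {x | IsSeq M x ∧ ∀ n, SeqLe (reflectSeq M α) (shiftn n x) ∧ SeqLe (shiftn n x) α}

/-- `B_n(X)`: the words of length `n` occurring as factors of elements of `X`. -/
def Bn (n : ℕ) (X : Set (ℕ → ℕ)) : Set (List ℕ) :=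
  {w | w.length = n ∧ ∃ x ∈ X, ∃ i, w = factor x i n}

/-- The language of `X`: all factors of elements of `X`. -/
def Lang (X : Set (ℕ → ℕ)) : Set (List ℕ) :=
  {w | ∃ x ∈ X, ∃ i, w = factor x i w.length}

/-- Topological transitivity: any two nonempty factors can be connected within the language. -/
def TopTransitive (X : Set (ℕ → ℕ)) : Prop :=
  ∀ u v, u ∈ Lang X → v ∈ Lang X → u ≠ [] → v ≠ [] → ∃ w, (u ++ w ++ v) ∈ Lang X

/-- Strict lexicographic order on words (intended for words of equal length). -/
def WordLt (u v : List ℕ) : Prop := List.Lex (· < ·) u v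

/-- Lexicographic order on words (intended for words of equal length). -/
def WordLe (u v : List ℕ) : Prop := WordLt u v ∨ u = v

/-- Irreducible sequence: `a ∈ 𝐕` and `a_1…a_j (\overline{a_1…a_j}⁺)^∞ ≺ a` for every `j ≥ 1`
with `a_j ≥ 1` such that `(a_1…a_j⁻)^∞ ∈ 𝐕`. -/
def IrrSeq (M : ℕ) (a : ℕ → ℕ) : Prop :=
  a ∈ Vset M ∧ ∀ j, 1 ≤ j → 1 ≤ a (j - 1) → per (wordMinus (pre a j)) ∈ Vset M →
    SeqLt (wordThen (pre a j) (per (wordPlus (reflectWord M (pre a j))))) a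

/-- The Thue–Morse sequence: `tau i` is the parity of the number of `1`s in the binary
expansion of `i`. -/
def tau (i : ℕ) : ℕ := (Nat.digits 2 i).sum % 2

/-- The generalized Thue–Morse sequence `λ` (0-indexed: `lam M i = λ_{i+1}`);
`λ_i = k + τ_i - τ_{i-1}` if `M = 2k`, and `λ_i = k + τ_i` if `M = 2k+1`. -/
def lam (M : ℕ) (i : ℕ) : ℕ :=
  if M % 2 = 0 then (M / 2 + tau (i + 1)) - tau i else M / 2 + tau (i + 1)

/-- The word `λ_1 … λ_L`. -/
def lamWord (M L : ℕ) : List ℕ := (List.range L).map (lam M)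

/-- `2^(n-1)` if `M` is even, `2^n` if `M` is odd. -/
def xiLen (M n : ℕ) : ℕ := if M % 2 = 0 then 2 ^ (n - 1) else 2 ^ n

/-- The sequence `ξ(n)`. -/
def xi (M n : ℕ) : ℕ → ℕ :=
  wordThen (lamWord M (xiLen M n)) (per (wordPlus (reflectWord M (lamWord M (xiLen M n)))))

/-- `2^n` if `M` is even, `2^(n+1)` if `M` is odd. -/
def starThreshold (M n : ℕ) : ℕ := if M % 2 = 0 then 2 ^ n else 2 ^ (n + 1)

/-- `*`-irreducible sequence. -/
def StarIrrSeq (M : ℕ) (a : ℕ → ℕ) : Prop :=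
  a ∈ Vset M ∧ ∃ n, 1 ≤ n ∧ SeqLe (xi M (n + 1)) a ∧ SeqLt a (xi M n) ∧
    ∀ j, 1 ≤ a (j - 1) → per (wordMinus (pre a j)) ∈ Vset M → starThreshold M n < j →
      SeqLt (wordThen (pre a j) (per (wordPlus (reflectWord M (pre a j))))) a

/-- The projection `π_q(x) = ∑_{i ≥ 1} x_i q^{-i}`. -/
noncomputable def piBase (q : ℝ) (x : ℕ → ℕ) : ℝ := ∑' i : ℕ, (x i : ℝ) / q ^ (i + 1)

/-- The set `𝐔_q` of sequences that are the unique expansion of their projection. -/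
def Uset (M : ℕ) (q : ℝ) : Set (ℕ → ℕ) :=
  {a | IsSeq M a ∧ ∀ b, IsSeq M b → piBase q b = piBase q a → b = a}

/-- The entropy function `H(q) = limsup_n (log #B_n(𝐔_q))/n`. -/
noncomputable def entropy (M : ℕ) (q : ℝ) : ℝ :=
  Filter.limsup (fun n : ℕ => Real.log ((Bn n (Uset M q)).ncard) / (n : ℝ)) Filter.atTop

/-- `α` is the quasi-greedy expansion of `1` in base `q`. -/
def QuasiGreedy (M : ℕ) (q : ℝ) (α : ℕ → ℕ) : Prop :=
  IsSeq M α ∧ piBase q α = 1 ∧ {n | α n ≠ 0}.Infinite ∧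
    ∀ n, 1 ≤ n → α (n - 1) < M → SeqLe (shiftn n α) α

/-- The univoque set `𝒰_q ⊆ ℝ`. -/
def univoqueSet (M : ℕ) (q : ℝ) : Set ℝ :=
  {x | ∃! a : ℕ → ℕ, IsSeq M a ∧ piBase q a = x}

/-- The bifurcation set `E` of the entropy function. -/
def Eset (M : ℕ) : Set ℝ :=
  {q | q ∈ Set.Ioc 1 (M + 1 : ℝ) ∧ ∀ ε : ℝ, 0 < ε →
    ∃ p ∈ Set.Ioo (q - ε) (q + ε) ∩ Set.Ioc 1 (M + 1 : ℝ), entropy M p ≠ entropy M q}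

/-- `[pL, pR]` is an irreducible interval. -/
def IrrInterval (M : ℕ) (pL pR : ℝ) : Prop :=
  ∃ a : List ℕ, a ≠ [] ∧ (∀ d ∈ a, d ≤ M) ∧ a.getLastD 0 < M ∧
    IrrSeq M (per a) ∧ piBase pL (per a) = 1 ∧
    piBase pR (wordThen (wordPlus a) (per (reflectWord M a))) = 1

/-- `[pL, pR]` is a `*`-irreducible interval. -/
def StarIrrInterval (M : ℕ) (pL pR : ℝ) : Prop :=
  ∃ a : List ℕ, a ≠ [] ∧ (∀ d ∈ a, d ≤ M) ∧ a.getLastD 0 < M ∧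
    StarIrrSeq M (per a) ∧ piBase pL (per a) = 1 ∧
    piBase pR (wordThen (wordPlus a) (per (reflectWord M a))) = 1

/-- Primitive words. -/
def PrimitiveWord (M : ℕ) (a : List ℕ) : Prop :=
  (∀ d ∈ a, d ≤ M) ∧ ∀ i < a.length,
    WordLt (reflectWord M (a.take (a.length - i))) (a.drop i) ∧
      WordLe (a.drop i) (a.take (a.length - i))

/-- The defining property of the reflection recurrence word:
`a_{s+1}…a_m⁻ = \overline{a_1…a_{m-s}}` with `s < m`. -/
def RRpred (M : ℕ) (a : List ℕ) (s : ℕ) : Prop :=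
  s < a.length ∧ wordMinus (a.drop s) = reflectWord M (a.take (a.length - s))

instance (M : ℕ) (a : List ℕ) : DecidablePred (RRpred M a) := fun s =>
  inferInstanceAs (Decidable (s < a.length ∧
    wordMinus (a.drop s) = reflectWord M (a.take (a.length - s))))

/-- The reflection recurrence word `R(a)` of a (primitive) word `a`. -/
noncomputable def RR (M : ℕ) (a : List ℕ) : List ℕ :=
  letI : Decidable (∃ s, RRpred M a s) := Classical.dec _
  if h : ∃ s, RRpred M a s then a.take (Nat.find h) else a

/-- Iterates `R^j(a)` of the reflection recurrence word. -/
noncomputable def RRiter (M : ℕ) (a : List ℕ) : ℕ → List ℕ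
  | 0 => a
  | j + 1 => RR M (RRiter M a j)

/-- The set `𝐈_N`. -/
def INset (M N : ℕ) : Set (ℕ → ℕ) :=
  {a | IsSeq M a ∧ pre a (2 * N) = List.replicate (2 * N - 1) M ++ [0] ∧
    ∀ s, 2 ≤ s → WordLt (List.replicate N 0) (factor a (s * N) N) ∧
      WordLt (factor a (s * N) N) (List.replicate N M)}

/-- The sequence `γ = k^∞` (`M = 2k`) or `((k+1)k)^∞` (`M = 2k+1`), the quasi-greedy expansion
of `1` in the generalized golden ratio base. -/
def gammaG (M : ℕ) : ℕ → ℕ :=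
  if M % 2 = 0 then per [M / 2] else per [M / 2 + 1, M / 2]

/-- The sequence `g = ((k+1)(k-1))^∞` (`M = 2k`) or `((k+1)(k+1)kk)^∞` (`M = 2k+1`), the
quasi-greedy expansion of `1` in base `q_{NT}`. -/
def gNT (M : ℕ) : ℕ → ℕ :=
  if M % 2 = 0 then per [M / 2 + 1, M / 2 - 1]
  else per [M / 2 + 1, M / 2 + 1, M / 2, M / 2]

lemma seqLe_head {x y : ℕ → ℕ} (h : SeqLe x y) : x 0 ≤ y 0 := by
  rcases h with ⟨n, h1, h2⟩ | rfl
  · rcases Nat.eq_zero_or_pos n with rfl | hn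
    · exact h2.le
    · exact (h1 0 hn).le
  · exact le_rfl

lemma seqLe_second {x y : ℕ → ℕ} (h : SeqLe x y) (h0 : x 0 = y 0) : x 1 ≤ y 1 := by
  rcases h with ⟨n, h1, h2⟩ | rfl
  · match n, h1, h2 with
    | 0, _, h2 => omega
    | 1, _, h2 => exact h2.le
    | (m+2), h1, _ => exact (h1 1 (by omega)).le
  · exact le_rfl

lemma seqLe_reflect {M : ℕ} {x y : ℕ → ℕ} (hy : IsSeq M y) (h : SeqLe x y) :
    SeqLe (reflectSeq M y) (reflectSeq M x) := by
  rcases h with ⟨n, h1, h2⟩ | rfl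
  · left
    refine ⟨n, fun i hi => by simp [reflectSeq, h1 i hi], ?_⟩
    have := hy n
    simp only [reflectSeq]
    omega
  · right; rfl

lemma seqLt_trans {x y z : ℕ → ℕ} (h1 : SeqLt x y) (h2 : SeqLt y z) : SeqLt x z := by
  obtain ⟨n, hn, hn'⟩ := h1
  obtain ⟨m, hm, hm'⟩ := h2
  refine ⟨min n m, fun i hi => ?_, ?_⟩
  · rw [hn i (lt_of_lt_of_le hi (min_le_left _ _)), hm i (lt_of_lt_of_le hi (min_le_right _ _))]
  · rcases lt_trichotomy n m with h | rfl | h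
    · simpa [min_eq_left h.le, ← hm n h] using hn'
    · simp only [min_self]; omega
    · simpa [min_eq_right h.le, hn m h] using hm'

lemma seqLe_trans {x y z : ℕ → ℕ} (h1 : SeqLe x y) (h2 : SeqLe y z) : SeqLe x z := by
  rcases h1 with h1 | rfl
  · rcases h2 with h2 | rfl
    · exact Or.inl (seqLt_trans h1 h2)
    · exact Or.inl h1
  · exact h2

lemma gammaG_even {M : ℕ} (h : M % 2 = 0) (i : ℕ) : gammaG M i = M / 2 := by
  simp [gammaG, h, per, Nat.mod_one]

lemma gammaG_odd {M : ℕ} (h : M % 2 = 1) (i : ℕ) :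
    gammaG M i = if i % 2 = 0 then M / 2 + 1 else M / 2 := by
  have h2 : M % 2 ≠ 0 := by omega
  simp only [gammaG, h2, if_false, per, List.length_cons, List.length_nil]
  rcases Nat.mod_two_eq_zero_or_one i with h3 | h3 <;> rw [h3] <;> rfl

/-- If `α` is a quasi-greedy admissible sequence, then `V_α ≠ ∅` iff
`γ ≼ α`, where `γ` is the quasi-greedy expansion of `1` in the generalized golden ratio
base `q_G`. -/
theorem statement5 (M : ℕ) (hM : 1 ≤ M) (α : ℕ → ℕ) (hseq : IsSeq M α)
    (hinf : {n | α n ≠ 0}.Infinite)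
    (hqg : ∀ n, 1 ≤ n → α (n - 1) < M → SeqLe (shiftn n α) α) :
    (Vsub M α).Nonempty ↔ SeqLe (gammaG M) α := by
  constructor
  · rintro ⟨x, hx, hV⟩
    have hb : ∀ n, M - α 0 ≤ x n ∧ x n ≤ α 0 := by
      intro n
      have h1 := seqLe_head (hV n).1
      have h2 := seqLe_head (hV n).2
      simp only [shiftn, reflectSeq, Nat.zero_add] at h1 h2
      exact ⟨h1, h2⟩
    have hα0 : M ≤ 2 * α 0 := by have := hb 0; omega
    rcases Nat.mod_two_eq_zero_or_one M with hm | hm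
    · -- M even
      by_cases hgt : M / 2 < α 0
      · exact Or.inl ⟨0, fun i hi => absurd hi (Nat.not_lt_zero i),
          by rw [gammaG_even hm]; exact hgt⟩
      · have hx0 : ∀ n, x n = M / 2 := fun n => by have := hb n; omega
        have hxg : shiftn 0 x = gammaG M :=
          funext fun i => by simp [shiftn, hx0, gammaG_even hm]
        have := (hV 0).2
        rwa [hxg] at this
    · -- M odd
      by_cases hgt : M / 2 + 1 < α 0
      · exact Or.inl ⟨0, fun i hi => absurd hi (Nat.not_lt_zero i),
          by rw [gammaG_odd hm]; simpa using hgt⟩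
      · have hα0' : α 0 = M / 2 + 1 := by omega
        by_cases hα1 : M / 2 + 1 ≤ α 1
        · refine Or.inl ⟨1, fun i hi => ?_, ?_⟩
          · have : i = 0 := by omega
            subst this
            rw [gammaG_odd hm]
            simpa using hα0'.symm
          · rw [gammaG_odd hm]
            simpa using hα1
        · -- alternation
          have hbx : ∀ n, M / 2 ≤ x n ∧ x n ≤ M / 2 + 1 := by
            intro n; have := hb n; omega
          have halt : ∀ n, x (1 + n) ≠ x n := by
            intro n heq
            by_cases hk : x n = M / 2 + 1
            · have h0 : shiftn n x 0 = α 0 := by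
                simp only [shiftn, Nat.zero_add]; omega
              have := seqLe_second (hV n).2 h0
              simp only [shiftn] at this
              omega
            · have hk' : x n = M / 2 := by have := hbx n; omega
              have h0 : reflectSeq M α 0 = shiftn n x 0 := by
                simp only [shiftn, reflectSeq, Nat.zero_add]; omega
              have := seqLe_second (hV n).1 h0
              simp only [shiftn, reflectSeq] at this
              omega
          obtain ⟨j, hj⟩ : ∃ j, x j = M / 2 + 1 := by
            by_cases h0 : x 0 = M / 2 + 1
            · exact ⟨0, h0⟩
            · refine ⟨1, ?_⟩
              have := halt 0
              have := hbx 0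
              have := hbx 1
              simp only [Nat.add_zero] at *
              omega
          have key : ∀ m, x (m + j) = gammaG M m := by
            intro m
            induction m with
            | zero => rw [gammaG_odd hm]; simpa using hj
            | succ m ih =>
              have hne := halt (m + j)
              have hb1 := hbx (1 + (m + j))
              rw [ih, gammaG_odd hm] at hne
              have heq : m + 1 + j = 1 + (m + j) := by omega
              rw [heq, gammaG_odd hm]
              rcases Nat.mod_two_eq_zero_or_one m with h2 | h2
              · have h3 : (m + 1) % 2 = 1 := by omega
                rw [h2] at hne
                rw [h3]
                rw [if_pos rfl] at hne
                rw [if_neg (by omega : ¬(1 = 0))]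
                omega
              · have h3 : (m + 1) % 2 = 0 := by omega
                rw [h2] at hne
                rw [h3]
                rw [if_neg (by omega : ¬(1 = 0))] at hne
                rw [if_pos rfl]
                omega
          have hxg : shiftn j x = gammaG M := funext fun i => key i
          have := (hV j).2
          rwa [hxg] at this
  · intro hγ
    have hrefl := seqLe_reflect hseq hγ
    rcases Nat.mod_two_eq_zero_or_one M with hm | hm
    · -- M even
      have hself : reflectSeq M (gammaG M) = gammaG M := by
        funext i
        simp only [reflectSeq, gammaG_even hm]
        omega
      rw [hself] at hrefl
      refine ⟨gammaG M, fun i => by rw [gammaG_even hm]; omega, fun n => ?_⟩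
      have hsh : shiftn n (gammaG M) = gammaG M := by
        funext i; simp [shiftn, gammaG_even hm]
      rw [hsh]
      exact ⟨hrefl, hγ⟩
    · -- M odd
      set δ := shiftn 1 (gammaG M) with hδ
      have hδi : ∀ i, δ i = gammaG M (i + 1) := fun i => rfl
      have hδγ : SeqLt δ (gammaG M) := by
        refine ⟨0, fun i hi => absurd hi (Nat.not_lt_zero i), ?_⟩
        rw [hδi, gammaG_odd hm, gammaG_odd hm]
        norm_num
      have hrg : reflectSeq M (gammaG M) = δ := by
        funext i
        rw [reflectSeq, hδi, gammaG_odd hm, gammaG_odd hm]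
        rcases Nat.mod_two_eq_zero_or_one i with h2 | h2
        · have h3 : (i + 1) % 2 = 1 := by omega
          rw [h2, h3]; simp; omega
        · have h3 : (i + 1) % 2 = 0 := by omega
          rw [h2, h3]; simp; omega
      rw [hrg] at hrefl
      have hδα : SeqLe δ α := seqLe_trans (Or.inl hδγ) hγ
      refine ⟨gammaG M, fun i => by rw [gammaG_odd hm]; split <;> omega, fun n => ?_⟩
      have hsh : shiftn n (gammaG M) = gammaG M ∨ shiftn n (gammaG M) = δ := by
        rcases Nat.mod_two_eq_zero_or_one n with h2 | h2
        · left
          funext i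
          simp only [shiftn, gammaG_odd hm]
          have : (i + n) % 2 = i % 2 := by omega
          rw [this]
        · right
          funext i
          simp only [shiftn, hδi, gammaG_odd hm]
          have : (i + n) % 2 = (i + 1) % 2 := by omega
          rw [this]
      rcases hsh with hsh | hsh <;> rw [hsh]
      · exact ⟨seqLe_trans hrefl (Or.inl hδγ), hγ⟩
      · exact ⟨hrefl, hδα⟩

end Paper
end

section
/- Let M ≥ 1 and suppose α ∈ 𝐕 satisfies g ≼ α ≼ ξ(1), where g := ((k+1)(k−1))^∞ and ξ(1) := (k+1)k^∞ if M = 2k, and g := ((k+1)(k+1)kk)^∞ and ξ(1) := (k+1)((k+1)k)^∞ if M = 2k+1. Then α is not irreducible. (These bounds correspond to bases q ∈ [q_{NT}, q_T].) -/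
namespace Paper

lemma seqLe_nth {x y : ℕ → ℕ} (h : SeqLe x y) {n : ℕ} (he : ∀ i < n, x i = y i) :
    x n ≤ y n := by
  rcases h with ⟨m, hm, hlt⟩ | rfl
  · rcases lt_trichotomy m n with hc | rfl | hc
    · exact absurd (he m hc) hlt.ne
    · exact hlt.le
    · exact (hm n hc).le
  · exact le_rfl

lemma seqLe_lt_false {x y : ℕ → ℕ} (h : SeqLe x y) (h' : SeqLt y x) : False := by
  rcases h' with ⟨n, hn, hlt⟩
  rcases h with ⟨m, hm, hlt'⟩ | rfl
  · rcases lt_trichotomy m n with hc | rfl | hc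
    · have := hn m hc; omega
    · omega
    · have := hm n hc; omega
  · exact lt_irrefl _ hlt

lemma tau_zero : tau 0 = 0 := by simp [tau]

lemma tau_one : tau 1 = 1 := by
  simp [tau, Nat.digits_def' (by norm_num : (1:ℕ) < 2)]

lemma tau_two : tau 2 = 1 := by
  rw [tau, Nat.digits_def' (by norm_num : (1:ℕ) < 2) (by norm_num)]
  simp [Nat.digits_def' (by norm_num : (1:ℕ) < 2)]

/-- If `α ∈ 𝐕` and `g ≼ α ≼ ξ(1)` (i.e. the corresponding base lies in
`[q_{NT}, q_T]`), then `α` is not irreducible. -/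
theorem statement6 (M : ℕ) (hM : 1 ≤ M) (α : ℕ → ℕ) (hα : α ∈ Vset M)
    (h1 : SeqLe (gNT M) α) (h2 : SeqLe α (xi M 1)) :
    ¬ IrrSeq M α := by
  intro hIrr
  obtain ⟨-, hj⟩ := hIrr
  rcases Nat.even_or_odd M with ⟨k, hkM⟩ | ⟨k, hkM⟩
  · -- M = 2k even
    have hkM' : M = 2 * k := by omega
    subst hkM'
    have hmod : 2 * k % 2 = 0 := by omega
    have hdiv : 2 * k / 2 = k := by omega
    have hk1 : 1 ≤ k := by omega
    have hlw : lamWord (2 * k) (xiLen (2 * k) 1) = [k + 1] := by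
      have hr1 : List.range 1 = [0] := by decide
      simp [lamWord, xiLen, hmod, lam, tau_zero, tau_one, hdiv, hr1]
    have g0 : gNT (2 * k) 0 = k + 1 := by
      simp [gNT, hmod, hdiv, per]
    have xi0 : xi (2 * k) 1 0 = k + 1 := by
      rw [xi, hlw]; simp [wordThen]
    have hα0 : α 0 = k + 1 := by
      have l1 := seqLe_nth h1 (n := 0) (fun i hi => absurd hi (Nat.not_lt_zero i))
      have l2 := seqLe_nth h2 (n := 0) (fun i hi => absurd hi (Nat.not_lt_zero i))
      omega
    have hpre : pre α 1 = [k + 1] := by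
      have hr1 : List.range 1 = [0] := by decide
      simp [pre, factor, hr1, hα0]
    have hwm : wordMinus (pre α 1) = [k] := by
      rw [hpre]; simp [wordMinus]
    have hVk : per [k] ∈ Vset (2 * k) := by
      have e1 : reflectSeq (2 * k) (per [k]) = per [k] := by
        funext i; simp [reflectSeq, per, Nat.mod_one]; omega
      have e2 : ∀ n, shiftn n (per [k]) = per [k] := by
        intro n; funext i; simp [shiftn, per, Nat.mod_one]
      refine ⟨fun i => ?_, fun n => ⟨?_, ?_⟩⟩
      · simp [per, Nat.mod_one]; omega
      · rw [e1, e2]; exact Or.inr rfl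
      · rw [e2]; exact Or.inr rfl
    have happ := hj 1 le_rfl (by simpa using by omega : 1 ≤ α (1 - 1))
      (by rw [hwm]; exact hVk)
    have hxieq : xi (2 * k) 1 =
        wordThen (pre α 1) (per (wordPlus (reflectWord (2 * k) (pre α 1)))) := by
      rw [hpre, xi, hlw]
    rw [← hxieq] at happ
    exact seqLe_lt_false h2 happ
  · -- M = 2k + 1 odd
    subst hkM
    have hmod : (2 * k + 1) % 2 = 1 := by omega
    have hdiv : (2 * k + 1) / 2 = k := by omega
    have hlw : lamWord (2 * k + 1) (xiLen (2 * k + 1) 1) = [k + 1, k + 1] := by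
      have hr2 : List.range 2 = [0, 1] := by decide
      simp [lamWord, xiLen, hmod, lam, tau_one, tau_two, hdiv, hr2]
    have g0 : gNT (2 * k + 1) 0 = k + 1 := by
      simp [gNT, hmod, hdiv, per]
    have g1 : gNT (2 * k + 1) 1 = k + 1 := by
      simp [gNT, hmod, hdiv, per]
    have xi0 : xi (2 * k + 1) 1 0 = k + 1 := by
      rw [xi, hlw]; simp [wordThen]
    have xi1 : xi (2 * k + 1) 1 1 = k + 1 := by
      rw [xi, hlw]; simp [wordThen]
    have hα0 : α 0 = k + 1 := by
      have l1 := seqLe_nth h1 (n := 0) (fun i hi => absurd hi (Nat.not_lt_zero i))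
      have l2 := seqLe_nth h2 (n := 0) (fun i hi => absurd hi (Nat.not_lt_zero i))
      omega
    have hα1 : α 1 = k + 1 := by
      have l1 := seqLe_nth h1 (n := 1) (by
        intro i hi
        have : i = 0 := by omega
        subst this; rw [g0, hα0])
      have l2 := seqLe_nth h2 (n := 1) (by
        intro i hi
        have : i = 0 := by omega
        subst this; rw [hα0, xi0])
      omega
    have hpre : pre α 2 = [k + 1, k + 1] := by
      have hr2 : List.range 2 = [0, 1] := by decide
      simp [pre, factor, hr2, hα0, hα1]
    have hwm : wordMinus (pre α 2) = [k + 1, k] := by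
      rw [hpre]; simp [wordMinus]
    have hVk : per [k + 1, k] ∈ Vset (2 * k + 1) := by
      have e1 : reflectSeq (2 * k + 1) (per [k + 1, k]) = per [k, k + 1] := by
        funext i
        rcases Nat.mod_two_eq_zero_or_one i with h | h <;> simp [reflectSeq, per, h] <;> omega
      have e2 : ∀ n, n % 2 = 0 → shiftn n (per [k + 1, k]) = per [k + 1, k] := by
        intro n hn; funext i
        have h2' : (i + n) % 2 = i % 2 := by omega
        simp [shiftn, per, h2']
      have e3 : ∀ n, n % 2 = 1 → shiftn n (per [k + 1, k]) = per [k, k + 1] := by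
        intro n hn; funext i
        rcases Nat.mod_two_eq_zero_or_one i with h | h <;>
          · have h2' : (i + n) % 2 = 1 - i % 2 := by omega
            simp [shiftn, per, h, h2']
      have hklt : SeqLt (per [k, k + 1]) (per [k + 1, k]) :=
        ⟨0, fun i hi => absurd hi (Nat.not_lt_zero i), by simp [per]⟩
      refine ⟨fun i => ?_, fun n => ?_⟩
      · rcases Nat.mod_two_eq_zero_or_one i with h | h <;> simp [per, h] <;> omega
      · rcases Nat.mod_two_eq_zero_or_one n with hn | hn
        · rw [e1, e2 n hn]
          exact ⟨Or.inl hklt, Or.inr rfl⟩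
        · rw [e1, e3 n hn]
          exact ⟨Or.inr rfl, Or.inl hklt⟩
    have happ := hj 2 (by norm_num) (by simpa using by omega : 1 ≤ α (2 - 1))
      (by rw [hwm]; exact hVk)
    have hxieq : xi (2 * k + 1) 1 =
        wordThen (pre α 2) (per (wordPlus (reflectWord (2 * k + 1) (pre α 2)))) := by
      rw [hpre, xi, hlw]
    rw [← hxieq] at happ
    exact seqLe_lt_false h2 happ


end Paper
end

section
/- Let M ≥ 1 and let a = a_1…a_m be a primitive word with m ≥ 2. Then the reflection recurrence word R(a) satisfies m/2 ≤ |R(a)| ≤ m, where |R(a)| denotes its length. -/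
namespace Paper

/-! If `s` witnesses `R(a)` with `2s < m`, the defining equation reads `a_{s+j} + a_j = M` for
`s + j < m - 1` (0-indexed) and `a_{m-1} + a_{m-1-s} = M + 1` at the decremented last letter.
For `s = 0` this gives `2 a_0 = M` and `2 a_{m-1} = M + 1`, which is impossible. For `s > 0`,
using it twice shows that `a_{2s} … a_{m-1}` is `a_0 … a_{m-2s-1}` with its last letter raised by
one, so it is lexicographically larger, against primitivity at the shift `2s`. -/

theorem wordLt_of_getElem {u v : List ℕ} {i : ℕ} (hu : i < u.length) (hv : i < v.length)
    (heq : ∀ j (hj : j < i), u[j] = v[j]) (hlt : u[i] < v[i]) : WordLt u v :=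
  List.lt_iff_exists.2 (Or.inr ⟨i, hu, hv, heq, hlt⟩)

theorem not_wordLe_of_wordLt {u v : List ℕ} (h : WordLt u v) : ¬WordLe v u := by
  unfold WordLe WordLt at *
  rintro (h' | rfl)
  · exact asymm h h'
  · exact irrefl _ h

theorem getLastD_eq_getElem {l : List ℕ} {i : ℕ} (hi : i + 1 = l.length) :
    l.getLastD 0 = l[i] := by
  rw [List.getLastD_eq_getLast?, List.getLast?_eq_getElem?, show l.length - 1 = i by omega,
    List.getElem?_eq_getElem]
  rfl

theorem getElem?_wordMinus_of_lt {l : List ℕ} {j : ℕ} (hj : j + 1 < l.length) :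
    (wordMinus l)[j]? = l[j]? := by
  rw [wordMinus, List.getElem?_append_left (by simp; omega), List.getElem?_dropLast,
    if_pos (by omega)]

theorem getElem?_wordMinus_of_add_one_eq {l : List ℕ} {j : ℕ} (hj : j + 1 = l.length) :
    (wordMinus l)[j]? = some (l.getLastD 0 - 1) := by
  rw [wordMinus, List.getElem?_append_right (by simp; omega), List.length_dropLast,
    show j - (l.length - 1) = 0 by omega]
  rfl

theorem getElem?_reflectWord_take {M : ℕ} {l : List ℕ} {n j : ℕ} (hj : j < n)
    (hl : j < l.length) :
    (reflectWord M (l.take n))[j]? = some (M - l[j]) := by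
  rw [reflectWord, List.getElem?_map, List.getElem?_take_of_lt hj, List.getElem?_eq_getElem hl]
  rfl

namespace RRpred

variable {M : ℕ} {a : List ℕ} {s : ℕ}

theorem getElem_add_getElem (hs : RRpred M a s) (ha : ∀ d ∈ a, d ≤ M) {i j : ℕ}
    (hij : i = s + j) (hi : i + 1 < a.length) : a[i] + a[j] = M := by
  subst hij
  have h : (wordMinus (a.drop s))[j]? = (reflectWord M (a.take (a.length - s)))[j]? := by
    rw [hs.2]
  rw [getElem?_wordMinus_of_lt (by simp; omega), List.getElem?_drop,
    getElem?_reflectWord_take (by omega) (by omega), List.getElem?_eq_getElem (by omega),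
    Option.some_inj] at h
  have := ha _ (List.getElem_mem (show j < a.length by omega))
  omega

theorem getElem_last_add_getElem (hs : RRpred M a s) (ha : ∀ d ∈ a, d ≤ M)
    (hpos : 1 ≤ a.getLastD 0) {i j : ℕ} (hij : i = s + j) (hi : i + 1 = a.length) :
    a[i] + a[j] = M + 1 := by
  subst hij
  have h : (wordMinus (a.drop s))[j]? = (reflectWord M (a.take (a.length - s)))[j]? := by
    rw [hs.2]
  have hj : j + 1 = (a.drop s).length := by simp; omega
  rw [getElem?_wordMinus_of_add_one_eq hj, getLastD_eq_getElem hj, List.getElem_drop,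
    getElem?_reflectWord_take (by omega) (by omega), Option.some_inj] at h
  rw [getLastD_eq_getElem hi] at hpos
  have := ha _ (List.getElem_mem (show j < a.length by omega))
  omega

end RRpred

namespace PrimitiveWord

variable {M : ℕ} {a : List ℕ}

theorem one_le_getLastD (ha : PrimitiveWord M a) (hne : a ≠ []) : 1 ≤ a.getLastD 0 := by
  obtain ⟨b, x, rfl⟩ := (List.eq_nil_or_concat a).resolve_left hne
  have h := (ha.2 b.length (by simp)).1
  rw [List.concat_eq_append, List.getLastD_concat]
  rcases b with _ | ⟨y, b⟩
  · have : M - x < x := by simpa [reflectWord, WordLt] using h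
    omega
  · have : M - y < x := by simpa [reflectWord, WordLt] using h
    omega

theorem length_le_two_mul (ha : PrimitiveWord M a) (hlen : 2 ≤ a.length) {s : ℕ}
    (hs : RRpred M a s) : a.length ≤ 2 * s := by
  by_contra! hlt
  have hpos := ha.one_le_getLastD (List.ne_nil_of_length_pos (by omega))
  have hsum {i j : ℕ} (hij : i = s + j) (hi : i + 1 < a.length) : a[i] + a[j] = M :=
    hs.getElem_add_getElem ha.1 hij hi
  have hlast {i j : ℕ} (hij : i = s + j) (hi : i + 1 = a.length) : a[i] + a[j] = M + 1 :=
    hs.getElem_last_add_getElem ha.1 hpos hij hi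
  rcases Nat.eq_zero_or_pos s with rfl | hs0
  · have h0 := hsum (i := 0) (j := 0) (by omega) (by omega)
    have h1 := hlast (i := a.length - 1) (j := a.length - 1) (by omega) (by omega)
    omega
  · refine not_wordLe_of_wordLt ?_ (ha.2 (2 * s) (by omega)).2
    refine wordLt_of_getElem (i := a.length - 2 * s - 1) (by simp; omega) (by simp; omega)
      (fun j hj => ?_) ?_
    · have h1 := hsum (i := 2 * s + j) (j := s + j) (by omega) (by omega)
      have h2 := hsum (i := s + j) (j := j) (by omega) (by omega)
      rw [List.getElem_take, List.getElem_drop]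
      omega
    · have h1 := hlast (i := a.length - 1) (j := a.length - s - 1) (by omega) (by omega)
      have h2 := hsum (i := a.length - s - 1) (j := a.length - 2 * s - 1) (by omega) (by omega)
      rw [List.getElem_take, List.getElem_drop]
      simp only [show 2 * s + (a.length - 2 * s - 1) = a.length - 1 by omega]
      omega

end PrimitiveWord

theorem statement9_general (M : ℕ) (a : List ℕ) (hlen : 2 ≤ a.length)
    (hprim : PrimitiveWord M a) :
    a.length ≤ 2 * (RR M a).length ∧ (RR M a).length ≤ a.length := by
  rw [RR]
  split_ifs with h
  · have hs := Nat.find_spec h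
    have hlower := hprim.length_le_two_mul hlen hs
    have hupper := hs.1
    rw [List.length_take]
    omega
  · omega

/-- For a primitive word `a` of length `m ≥ 2`, the reflection recurrence
word satisfies `m/2 ≤ |R(a)| ≤ m`. -/
theorem statement9 (M : ℕ) (hM : 1 ≤ M) (a : List ℕ) (hlen : 2 ≤ a.length)
    (hprim : PrimitiveWord M a) :
    a.length ≤ 2 * (RR M a).length ∧ (RR M a).length ≤ a.length :=
  statement9_general M a hlen hprim

end Paper
end

section
/- Let M ≥ 1 and let a = a_1…a_m be a primitive word with m ≥ 2. Then the reflection recurrence word R(a) is also primitive. -/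
namespace Paper

/-! ### Auxiliary lemmas for Statement 10 -/

private lemma lex_cons_iff' {x y : ℕ} {u v : List ℕ} :
    List.Lex (· < ·) (x :: u) (y :: v) ↔ x < y ∨ (x = y ∧ List.Lex (· < ·) u v) := by
  constructor
  · intro h
    cases h with
    | rel h => exact Or.inl h
    | cons h => exact Or.inr ⟨rfl, h⟩
  · rintro (h | ⟨rfl, h⟩)
    · exact .rel h
    · exact .cons h

private lemma wordLt_map_range {n : ℕ} {f g : ℕ → ℕ} :
    WordLt ((List.range n).map f) ((List.range n).map g) ↔
    ∃ k < n, (∀ j < k, f j = g j) ∧ f k < g k := by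
  induction n generalizing f g with
  | zero => simp [WordLt]
  | succ n ih =>
    rw [List.range_succ_eq_map]
    simp only [List.map_cons, List.map_map]
    rw [WordLt, lex_cons_iff']
    constructor
    · rintro (h | ⟨h0, h⟩)
      · exact ⟨0, by omega, by omega, h⟩
      · obtain ⟨k, hk, he, hl⟩ := (ih (f := f ∘ Nat.succ) (g := g ∘ Nat.succ)).mp h
        refine ⟨k + 1, by omega, ?_, hl⟩
        intro j hj
        cases j with
        | zero => exact h0
        | succ j => exact he j (by omega)
    · rintro ⟨k, hk, he, hl⟩
      cases k with
      | zero => exact Or.inl hl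
      | succ k =>
        refine Or.inr ⟨he 0 (by omega), (ih (f := f ∘ Nat.succ) (g := g ∘ Nat.succ)).mpr
          ⟨k, by omega, fun j hj => he (j + 1) (by omega), hl⟩⟩

private lemma map_range_eq_iff {n : ℕ} {f g : ℕ → ℕ} :
    (List.range n).map f = (List.range n).map g ↔ ∀ j < n, f j = g j := by
  constructor
  · intro h j hj
    have := congrArg (fun l : List ℕ => l[j]?) h
    simpa [List.getElem?_map, List.getElem?_range, hj] using this
  · intro h
    exact List.map_congr_left (fun x hx => h x (List.mem_range.mp hx))

private lemma wordLe_map_range {n : ℕ} {f g : ℕ → ℕ} :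
    WordLe ((List.range n).map f) ((List.range n).map g) ↔
    (∃ k < n, (∀ j < k, f j = g j) ∧ f k < g k) ∨ ∀ j < n, f j = g j := by
  rw [WordLe, wordLt_map_range, map_range_eq_iff]

private lemma take_eq_map_range (a : List ℕ) (n : ℕ) (hn : n ≤ a.length) :
    a.take n = (List.range n).map (fun j => a.getD j 0) := by
  apply List.ext_getElem
  · simp [hn]
  · intro i h1 h2
    simp only [List.getElem_take, List.getElem_map, List.getElem_range]
    rw [List.getD_eq_getElem a 0 (by simp at h1; omega)]

private lemma drop_eq_map_range (a : List ℕ) (i : ℕ) (hi : i ≤ a.length) :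
    a.drop i = (List.range (a.length - i)).map (fun j => a.getD (i + j) 0) := by
  apply List.ext_getElem
  · simp
  · intro j h1 h2
    simp only [List.getElem_drop, List.getElem_map, List.getElem_range]
    rw [List.getD_eq_getElem a 0 (by simp at h1; omega)]

private lemma drop_take_eq_map_range (a : List ℕ) (i s : ℕ) (hi : i ≤ s) (hs : s ≤ a.length) :
    (a.take s).drop i = (List.range (s - i)).map (fun j => a.getD (i + j) 0) := by
  apply List.ext_getElem
  · simp; omega
  · intro j h1 h2
    simp only [List.getElem_drop, List.getElem_take, List.getElem_map, List.getElem_range]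
    rw [List.getD_eq_getElem a 0 (by simp at h1; omega)]

private lemma reflect_map_range (M n : ℕ) (f : ℕ → ℕ) :
    reflectWord M ((List.range n).map f) = (List.range n).map (fun j => M - f j) := by
  simp [reflectWord, List.map_map]

private lemma wordMinus_drop_eq (a : List ℕ) (s : ℕ) (hs : s < a.length) :
    wordMinus (a.drop s) = (List.range (a.length - s)).map
      (fun j => if j + 1 = a.length - s then a.getD (a.length - 1) 0 - 1
        else a.getD (s + j) 0) := by
  have hlen : (a.drop s).length = a.length - s := by simp
  apply List.ext_getElem
  · simp [wordMinus]; omega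
  · intro j h1 h2
    have hj : j < a.length - s := by
      have := h1
      simp [wordMinus, hlen] at this
      omega
    have hdl : (List.drop s a).dropLast.length = a.length - s - 1 := by simp
    have h3 : (List.drop s a).getLastD 0 = a.getD (a.length - 1) 0 := by
      rw [List.getLastD_eq_getLast?, List.getLast?_eq_getElem?, List.getD_eq_getElem?_getD,
        hlen, List.getElem?_drop]
      have heq : s + (a.length - s - 1) = a.length - 1 := by omega
      rw [heq]
    simp only [wordMinus, List.getElem_append, List.getElem_map, List.getElem_range]
    by_cases hc : j + 1 = a.length - s
    · rw [dif_neg (by omega), if_pos hc]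
      have hz : j - (List.drop s a).dropLast.length = 0 := by omega
      simp only [hz, List.getElem_cons_zero, h3]
    · rw [dif_pos (by omega), if_neg hc]
      rw [List.getElem_dropLast, List.getElem_drop]
      exact (List.getD_eq_getElem a 0 (by omega)).symm

private lemma rrpred_iff (M : ℕ) (a : List ℕ) (t : ℕ) (ht : t < a.length) :
    RRpred M a t ↔ ((∀ j, j + 1 < a.length - t → a.getD (t + j) 0 = M - a.getD j 0) ∧
      a.getD (a.length - 1) 0 - 1 = M - a.getD (a.length - t - 1) 0) := by
  rw [RRpred]
  rw [wordMinus_drop_eq a t ht, take_eq_map_range a _ (by omega), reflect_map_range,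
    map_range_eq_iff]
  constructor
  · rintro ⟨-, h⟩
    constructor
    · intro j hj
      have := h j (by omega)
      rwa [if_neg (by omega)] at this
    · have := h (a.length - t - 1) (by omega)
      rwa [if_pos (by omega)] at this
  · rintro ⟨h1, h2⟩
    refine ⟨ht, fun j hj => ?_⟩
    by_cases hc : j + 1 = a.length - t
    · rw [if_pos hc]
      have hj' : j = a.length - t - 1 := by omega
      rw [hj']
      exact h2
    · rw [if_neg hc]
      exact h1 j (by omega)

private lemma key_shift (m p : ℕ) (d : ℕ → ℕ)
    (hup : ∀ i < m, (∃ k, k < m - i ∧ (∀ j < k, d (i + j) = d j) ∧ d (i + k) < d k) ∨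
      ∀ j < m - i, d (i + j) = d j)
    (hpm : p < m) (t : ℕ) (htm : t < m - p)
    (he : ∀ u < t, d (p + u) = d u) (hgt : d t < d (p + t)) : False := by
  rcases hup p hpm with ⟨k, hk, heq, hlt⟩ | hall
  · rcases lt_trichotomy k t with h | h | h
    · have := he k (by omega); omega
    · subst h; omega
    · have := heq t h; omega
  · have := hall t htm; omega

private lemma key (M m s : ℕ) (d : ℕ → ℕ) (hd : ∀ i, d i ≤ M) (hm : 2 ≤ m)
    (hlow : ∀ i < m, ∃ k, k < m - i ∧ (∀ j < k, M - d j = d (i + j)) ∧ M - d k < d (i + k))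
    (hup : ∀ i < m, (∃ k, k < m - i ∧ (∀ j < k, d (i + j) = d j) ∧ d (i + k) < d k) ∨
      ∀ j < m - i, d (i + j) = d j)
    (hsm : s < m)
    (hR1 : ∀ j, j + 1 < m - s → d (s + j) = M - d j)
    (hR2 : d (m - 1) - 1 = M - d (m - s - 1))
    (hmin : ∀ t < s, ¬((∀ j, j + 1 < m - t → d (t + j) = M - d j) ∧
      d (m - 1) - 1 = M - d (m - t - 1)))
    (i : ℕ) (his : i < s) :
    ∃ k, k < s - i ∧ (∀ j < k, M - d j = d (i + j)) ∧ M - d k < d (i + k) := by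
  obtain ⟨k, hk, heq, hlt⟩ := hlow i (by omega)
  by_cases hks : k < s - i
  · exact ⟨k, hks, heq, hlt⟩
  · exfalso
    set p := s - i with hp
    have hp1 : 1 ≤ p := by omega
    have hpk : p ≤ k := by omega
    have dm1 : 1 ≤ d (m - 1) := by
      obtain ⟨k', hk', _, hlt'⟩ := hlow (m - 1) (by omega)
      have : k' = 0 := by omega
      subst this
      have : m - 1 + 0 = m - 1 := by omega
      rw [this] at hlt'
      omega
    have hR2' : d (m - 1) = M - d (m - s - 1) + 1 := by omega
    have star : ∀ j, p ≤ j → j < k → d j = d (j - p) := by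
      intro j hpj hjk
      have e1 : M - d j = d (i + j) := heq j hjk
      have e2 : i + j = s + (j - p) := by omega
      have e3 : (j - p) + 1 < m - s := by omega
      have e4 : d (s + (j - p)) = M - d (j - p) := hR1 (j - p) e3
      rw [e2, e4] at e1
      have := hd j; have := hd (j - p)
      omega
    by_cases hke : k + 1 < m - i
    · have e2 : i + k = s + (k - p) := by omega
      have e3 : (k - p) + 1 < m - s := by omega
      have e4 : d (i + k) = M - d (k - p) := by rw [e2]; exact hR1 (k - p) e3
      have hlt2 : d (k - p) < d k := by
        have := hd k; have := hd (k - p); omega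
      refine key_shift m p d hup (by omega) (k - p) (by omega) ?_ ?_
      · intro u hu
        have := star (p + u) (by omega) (by omega)
        have e5 : p + u - p = u := by omega
        rw [e5] at this
        omega
      · have e5 : p + (k - p) = k := by omega
        rw [e5]; exact hlt2
    · have hkm : k = m - i - 1 := by omega
      have him : i + k = m - 1 := by omega
      rw [him] at hlt
      have hdle : d (m - s - 1) ≤ d (m - i - 1) := by
        have := hd (m - s - 1); have := hd (m - i - 1)
        rw [hkm] at hlt
        omega
      rcases lt_or_eq_of_le hdle with hlt2 | heq2
      · refine key_shift m p d hup (by omega) (m - s - 1) (by omega) ?_ ?_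
        · intro u hu
          have := star (p + u) (by omega) (by omega)
          have e5 : p + u - p = u := by omega
          rw [e5] at this
          omega
        · have e5 : p + (m - s - 1) = m - i - 1 := by omega
          rw [e5]; exact hlt2
      · refine hmin i his ⟨?_, ?_⟩
        · intro j hj
          exact (heq j (by omega)).symm
        · rw [← heq2]
          exact hR2

/-- The reflection recurrence word of a primitive word of length `≥ 2`
is primitive. -/
theorem statement10 (M : ℕ) (hM : 1 ≤ M) (a : List ℕ) (hlen : 2 ≤ a.length)
    (hprim : PrimitiveWord M a) :
    PrimitiveWord M (RR M a) := by
  classical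
  have hd : ∀ n, a.getD n 0 ≤ M := by
    intro n
    by_cases hn : n < a.length
    · rw [List.getD_eq_getElem a 0 hn]
      exact hprim.1 _ (List.getElem_mem _)
    · rw [List.getD_eq_default a 0 (by omega)]
      omega
  have hlow : ∀ i < a.length, ∃ k, k < a.length - i ∧
      (∀ j < k, M - a.getD j 0 = a.getD (i + j) 0) ∧
      M - a.getD k 0 < a.getD (i + k) 0 := by
    intro i hi
    have h := (hprim.2 i hi).1
    rw [take_eq_map_range a (a.length - i) (by omega), reflect_map_range,
      drop_eq_map_range a i (by omega), wordLt_map_range] at h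
    obtain ⟨k, hk, he, hl⟩ := h
    exact ⟨k, hk, he, hl⟩
  have hup : ∀ i < a.length, (∃ k, k < a.length - i ∧
      (∀ j < k, a.getD (i + j) 0 = a.getD j 0) ∧ a.getD (i + k) 0 < a.getD k 0) ∨
      ∀ j < a.length - i, a.getD (i + j) 0 = a.getD j 0 := by
    intro i hi
    have h := (hprim.2 i hi).2
    rw [drop_eq_map_range a i (by omega), take_eq_map_range a (a.length - i) (by omega),
      wordLe_map_range] at h
    rcases h with ⟨k, hk, he, hl⟩ | hall
    · exact Or.inl ⟨k, hk, he, hl⟩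
    · exact Or.inr hall
  by_cases hex : ∃ s, RRpred M a s
  · unfold RR
    rw [dif_pos hex]
    set s := Nat.find hex with hsdef
    have hs : RRpred M a s := Nat.find_spec hex
    have hsm : s < a.length := hs.1
    have hR := (rrpred_iff M a s hsm).mp hs
    have hmin : ∀ t < s, ¬((∀ j, j + 1 < a.length - t → a.getD (t + j) 0 = M - a.getD j 0) ∧
        a.getD (a.length - 1) 0 - 1 = M - a.getD (a.length - t - 1) 0) := by
      intro t ht hcon
      have ht' : t < Nat.find hex := by rwa [hsdef] at ht
      exact Nat.find_min hex ht' ((rrpred_iff M a t (by omega)).mpr hcon)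
    constructor
    · intro x hx
      exact hprim.1 x (List.mem_of_mem_take hx)
    · intro i hi
      have hlen' : (a.take s).length = s := by rw [List.length_take]; omega
      rw [hlen'] at hi ⊢
      have htt : (a.take s).take (s - i) = a.take (s - i) := by
        rw [List.take_take]
        congr 1
        omega
      constructor
      · rw [htt, take_eq_map_range a (s - i) (by omega), reflect_map_range,
          drop_take_eq_map_range a i s (by omega) (by omega), wordLt_map_range]
        obtain ⟨k, hk, he, hl⟩ := key M a.length s (fun n => a.getD n 0) hd hlen hlow hup
          hsm hR.1 hR.2 hmin i hi
        exact ⟨k, hk, he, hl⟩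
      · rw [htt, take_eq_map_range a (s - i) (by omega),
          drop_take_eq_map_range a i s (by omega) (by omega), wordLe_map_range]
        rcases hup i (by omega) with ⟨k, hk, he, hl⟩ | hall
        · by_cases hks : k < s - i
          · exact Or.inl ⟨k, hks, he, hl⟩
          · exact Or.inr (fun j hj => he j (by omega))
        · exact Or.inr (fun j hj => hall j (by omega))
  · unfold RR
    rw [dif_neg hex]
    exact hprim


end Paper
end

section
/- Let M ≥ 1 and let a = a_1…a_m be a primitive word with m ≥ 2. Then there exists j ∈ {0,1,…,m} such that either R^{j+1}(a) = R^j(a) with |R^j(a)| ≥ 2, or R^j(a) is the two-letter word a_1(M − a_1 + 1) (that is, a_1\overline{a_1}⁺). Here R^0(a) := a and R^{i+1}(a) := R(R^i(a)) (each iterate is primitive, so R applies). -/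
namespace Paper

section Statement11Aux

private lemma length_take_of_le {l : List ℕ} {n : ℕ} (h : n ≤ l.length) :
    (l.take n).length = n := by rw [List.length_take]; exact min_eq_left h

private lemma length_reflect {M : ℕ} (l : List ℕ) : (reflectWord M l).length = l.length := by
  simp [reflectWord]

private lemma getD_drop (l : List ℕ) (i k : ℕ) : (l.drop i).getD k 0 = l.getD (i + k) 0 := by
  rw [List.getD_eq_getElem?_getD, List.getD_eq_getElem?_getD, List.getElem?_drop]

private lemma getD_take {l : List ℕ} {n k : ℕ} (h : k < n) :
    (l.take n).getD k 0 = l.getD k 0 := by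
  rw [List.getD_eq_getElem?_getD, List.getD_eq_getElem?_getD, List.getElem?_take, if_pos h]

private lemma getD_reflect {M : ℕ} (l : List ℕ) {k : ℕ} (h : k < l.length) :
    (reflectWord M l).getD k 0 = M - l.getD k 0 := by
  rw [reflectWord, List.getD_eq_getElem?_getD, List.getD_eq_getElem?_getD, List.getElem?_map,
    List.getElem?_eq_getElem h]
  rfl

private lemma getLastD_eq (l : List ℕ) : l.getLastD 0 = l.getD (l.length - 1) 0 := by
  rw [List.getLastD_eq_getLast?, List.getLast?_eq_getElem?, List.getD_eq_getElem?_getD]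

private lemma getD_wordMinus_lt {l : List ℕ} {k : ℕ} (h : k < l.length - 1) :
    (wordMinus l).getD k 0 = l.getD k 0 := by
  rw [wordMinus, List.getD_eq_getElem?_getD, List.getElem?_append,
    if_pos (show k < l.dropLast.length by rw [List.length_dropLast]; exact h),
    List.dropLast_eq_take, List.getElem?_take, if_pos h, ← List.getD_eq_getElem?_getD]

private lemma getD_wordMinus_last {l : List ℕ} (h : l ≠ []) :
    (wordMinus l).getD (l.length - 1) 0 = l.getD (l.length - 1) 0 - 1 := by
  have hl : 1 ≤ l.length := List.length_pos_iff.mpr h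
  rw [wordMinus, List.getD_eq_getElem?_getD,
    List.getElem?_append_right (by rw [List.length_dropLast]),
    List.length_dropLast, show l.length - 1 - (l.length - 1) = 0 by omega,
    List.getElem?_cons_zero]
  rw [show (some (l.getLastD 0 - 1)).getD 0 = l.getLastD 0 - 1 from rfl, getLastD_eq l]

private lemma getD_le {M : ℕ} {b : List ℕ} (h : ∀ d ∈ b, d ≤ M) {k : ℕ} (hk : k < b.length) :
    b.getD k 0 ≤ M := by
  rw [List.getD_eq_getElem b 0 hk]; exact h _ (List.getElem_mem hk)

private lemma list_eq_of_getD {u v : List ℕ} (hl : u.length = v.length)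
    (h : ∀ k < u.length, u.getD k 0 = v.getD k 0) : u = v :=
  List.ext_getElem hl (fun n h1 h2 => by
    rw [← List.getD_eq_getElem u 0 h1, ← List.getD_eq_getElem v 0 h2]; exact h n h1)

private lemma wordLt_irrefl : ∀ l : List ℕ, ¬ WordLt l l := by
  intro l
  induction l with
  | nil => intro h; cases h
  | cons x t ih =>
    intro h
    unfold WordLt at h
    cases h with
    | rel h => exact absurd h (lt_irrefl x)
    | cons h => exact ih h

private lemma not_wordLe_of : ∀ (u v : List ℕ), u.length = v.length → ∀ k, k < u.length →
    (∀ i < k, u.getD i 0 = v.getD i 0) → v.getD k 0 < u.getD k 0 → ¬ WordLe u v := by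
  intro u
  induction u with
  | nil => intro v _ k hk; exact absurd hk (Nat.not_lt_zero k)
  | cons x t ih =>
    intro v hlen k hk hpre hlt hle
    cases v with
    | nil => simp at hlen
    | cons y s =>
      cases k with
      | zero =>
        simp only [List.getD_cons_zero] at hlt
        cases hle with
        | inl h =>
          unfold WordLt at h
          cases h with
          | rel h => omega
          | cons h => exact absurd hlt (lt_irrefl x)
        | inr h =>
          have h1 : x = y := by injection h
          omega
      | succ k =>
        have hxy : x = y := by
          have := hpre 0 (Nat.succ_pos k); simpa using this
        simp only [List.getD_cons_succ] at hlt
        cases hle with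
        | inl h =>
          unfold WordLt at h
          cases h with
          | rel h => omega
          | cons h =>
            exact ih s (by simpa using hlen) k (by simpa using hk)
              (fun i hi => by have := hpre (i+1) (by omega); simpa using this)
              hlt (Or.inl h)
        | inr h =>
          have h2 : t = s := by injection h
          subst h2
          exact absurd hlt (lt_irrefl _)

private lemma le_of_wordLe {u v : List ℕ} (hlen : u.length = v.length) (h : WordLe u v)
    {k : ℕ} (hk : k < u.length) (hpre : ∀ i < k, u.getD i 0 = v.getD i 0) :
    u.getD k 0 ≤ v.getD k 0 := by
  by_contra hc
  exact not_wordLe_of u v hlen k hk hpre (by omega) h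

private lemma wordLt_take {u v : List ℕ} (h : WordLt u v) (k : ℕ) :
    WordLe (u.take k) (v.take k) := by
  unfold WordLt at h
  induction h generalizing k with
  | nil =>
    cases k with
    | zero => exact Or.inr rfl
    | succ k => exact Or.inl List.Lex.nil
  | rel hab =>
    cases k with
    | zero => exact Or.inr rfl
    | succ k => exact Or.inl (List.Lex.rel hab)
  | cons h ih =>
    cases k with
    | zero => exact Or.inr rfl
    | succ k =>
      simp only [List.take_succ_cons]
      rcases ih k with h' | h'
      · exact Or.inl (List.Lex.cons h')
      · exact Or.inr (by rw [h'])

private lemma wordLe_take {u v : List ℕ} (h : WordLe u v) (k : ℕ) :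
    WordLe (u.take k) (v.take k) := by
  rcases h with h | h
  · exact wordLt_take h k
  · subst h; exact Or.inr rfl

/-- The invariant preserved by the reflection recurrence map. -/
private def Inv (M : ℕ) (b : List ℕ) : Prop :=
  (∀ d ∈ b, d ≤ M) ∧ (∀ i < b.length, WordLe (b.drop i) (b.take (b.length - i))) ∧
    ¬(b.getD 0 0 = M ∧ b.getD 1 0 = 0)

private lemma inv_take {M : ℕ} {b : List ℕ} (h : Inv M b) {s : ℕ} (hs2 : 2 ≤ s)
    (hsl : s ≤ b.length) : Inv M (b.take s) := by
  obtain ⟨h1, h2, h3⟩ := h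
  have hlen : (b.take s).length = s := length_take_of_le hsl
  refine ⟨fun d hd => h1 d (List.take_subset s b hd), ?_, ?_⟩
  · intro i hi
    rw [hlen] at hi ⊢
    rw [List.drop_take]
    have h5 := wordLe_take (h2 i (by omega)) (s - i)
    rw [List.take_take, min_eq_left (by omega : s - i ≤ b.length - i)] at h5
    rw [List.take_take, min_eq_left (by omega : s - i ≤ s)]
    exact h5
  · rintro ⟨ha, hb⟩
    exact h3 ⟨by rw [← getD_take (l := b) (show 0 < s by omega)]; exact ha,
      by rw [← getD_take (l := b) (show 1 < s by omega)]; exact hb⟩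

private lemma prim_inv3 {M : ℕ} {a : List ℕ} (hM : 1 ≤ M) (h : PrimitiveWord M a)
    (hlen2 : 2 ≤ a.length) : ¬(a.getD 0 0 = M ∧ a.getD 1 0 = 0) := by
  rintro ⟨h0, h1⟩
  set m := a.length with hm
  have hfM : ∀ k, k < m → a.getD k 0 ≤ M := fun k hk => getD_le h.1 hk
  have alt : ∀ j, j < m → a.getD j 0 = if j % 2 = 0 then M else 0 := by
    intro j
    induction j with
    | zero => intro _; simpa using h0
    | succ j ih =>
      intro hj
      have hfj := ih (by omega)
      have hdl : (a.drop j).length = m - j := by rw [List.length_drop]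
      by_cases hpar : j % 2 = 0
      · rw [if_pos hpar] at hfj
        have hle := (h.2 j (by omega)).2
        have hext := le_of_wordLe (u := a.drop j) (v := a.take (m - j))
          (by rw [hdl, length_take_of_le (by omega)]) hle
          (k := 1) (by rw [hdl]; omega)
          (fun i hi => by
            have hi0 : i = 0 := by omega
            subst hi0
            rw [getD_drop, getD_take (by omega : (0:ℕ) < m - j), Nat.add_zero, hfj, h0])
        rw [getD_drop, getD_take (show (1:ℕ) < m - j by omega)] at hext
        rw [if_neg (by omega : ¬ (j+1) % 2 = 0)]
        omega
      · rw [if_neg hpar] at hfj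
        have hlt := (h.2 j (by omega)).1
        have hext := le_of_wordLe (u := reflectWord M (a.take (m - j))) (v := a.drop j)
          (by rw [length_reflect, length_take_of_le (by omega), hdl]) (Or.inl hlt)
          (k := 1) (by rw [length_reflect, length_take_of_le (by omega)]; omega)
          (fun i hi => by
            have hi0 : i = 0 := by omega
            subst hi0
            rw [getD_reflect _ (by rw [length_take_of_le (by omega)]; omega),
              getD_take (by omega : (0:ℕ) < m - j), getD_drop, Nat.add_zero, h0, hfj]
            omega)
        rw [getD_reflect _ (by rw [length_take_of_le (by omega)]; omega),
          getD_take (show (1:ℕ) < m - j by omega), getD_drop] at hext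
        have hb := hfM (j+1) hj
        rw [if_pos (by omega : (j+1) % 2 = 0)]
        omega
  by_cases hpar : m % 2 = 0
  · have hlt := (h.2 (m - 1) (by omega)).1
    have heq : reflectWord M (a.take (m - (m - 1))) = a.drop (m - 1) := by
      apply list_eq_of_getD
      · rw [length_reflect, length_take_of_le (by omega), List.length_drop]
      · intro k hk
        rw [length_reflect, length_take_of_le (by omega)] at hk
        have hk0 : k = 0 := by omega
        subst hk0
        rw [getD_reflect _ (by rw [length_take_of_le (by omega)]; omega),
          getD_take (by omega : (0:ℕ) < m - (m-1)), getD_drop]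
        have ha := alt (m - 1 + 0) (by omega)
        rw [if_neg (by omega : ¬ (m - 1 + 0) % 2 = 0)] at ha
        omega
    rw [heq] at hlt
    exact wordLt_irrefl _ hlt
  · have hlt := (h.2 1 (by omega)).1
    have heq : reflectWord M (a.take (m - 1)) = a.drop 1 := by
      apply list_eq_of_getD
      · rw [length_reflect, length_take_of_le (by omega), List.length_drop]
      · intro k hk
        rw [length_reflect, length_take_of_le (by omega)] at hk
        rw [getD_reflect _ (by rw [length_take_of_le (by omega)]; omega),
          getD_take (by omega : k < m - 1), getD_drop]
        have ha := alt k (by omega)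
        have hb := alt (1 + k) (by omega)
        by_cases hp : k % 2 = 0
        · rw [if_pos hp] at ha
          rw [if_neg (by omega)] at hb
          omega
        · rw [if_neg hp] at ha
          rw [if_pos (by omega)] at hb
          omega
    rw [heq] at hlt
    exact wordLt_irrefl _ hlt

private lemma prim_inv {M : ℕ} {a : List ℕ} (hM : 1 ≤ M) (h : PrimitiveWord M a)
    (hlen2 : 2 ≤ a.length) : Inv M a :=
  ⟨h.1, fun i hi => (h.2 i hi).2, prim_inv3 hM h hlen2⟩

private lemma not_RRpred_zero {M : ℕ} {b : List ℕ} (hM : 1 ≤ M) (h1 : ∀ d ∈ b, d ≤ M)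
    (hm : 2 ≤ b.length) : ¬ RRpred M b 0 := by
  rintro ⟨_, heq⟩
  rw [List.drop_zero, Nat.sub_zero, List.take_length] at heq
  have hne : b ≠ [] := by intro hc; rw [hc] at hm; simp at hm
  have e0 := congrArg (fun l => l.getD 0 0) heq
  have eL := congrArg (fun l => l.getD (b.length - 1) 0) heq
  rw [getD_wordMinus_lt (by omega), getD_reflect _ (by omega)] at e0
  rw [getD_wordMinus_last hne, getD_reflect _ (by omega)] at eL
  have l0 := getD_le h1 (show 0 < b.length by omega)
  have lL := getD_le h1 (show b.length - 1 < b.length by omega)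
  omega

private lemma rel_of_RRpred_one {M : ℕ} {b : List ℕ} (h : RRpred M b 1) :
    (∀ k, k < b.length - 2 → b.getD (k+1) 0 = M - b.getD k 0) ∧
      b.getD (b.length - 1) 0 - 1 = M - b.getD (b.length - 2) 0 := by
  obtain ⟨hlt, heq⟩ := h
  have hm : 2 ≤ b.length := hlt
  have hdl : (b.drop 1).length = b.length - 1 := by rw [List.length_drop]
  have hdne : b.drop 1 ≠ [] := by
    intro hc
    have := congrArg List.length hc
    rw [hdl] at this
    simp at this
    omega
  constructor
  · intro k hk
    have e := congrArg (fun l => l.getD k 0) heq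
    rw [getD_wordMinus_lt (by rw [hdl]; omega), getD_drop,
      getD_reflect _ (by rw [length_take_of_le (by omega)]; omega),
      getD_take (by omega : k < b.length - 1)] at e
    rw [Nat.add_comm 1 k] at e
    exact e
  · have e := congrArg (fun l => l.getD ((b.drop 1).length - 1) 0) heq
    rw [getD_wordMinus_last hdne, hdl, getD_drop,
      getD_reflect _ (by rw [length_take_of_le (show b.length - 1 ≤ b.length by omega)]; omega),
      getD_take (by omega : b.length - 1 - 1 < b.length - 1)] at e
    rw [show 1 + (b.length - 1 - 1) = b.length - 1 by omega,
      show b.length - 1 - 1 = b.length - 2 by omega] at e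
    exact e

private lemma RRpred_one_eq {M : ℕ} {b : List ℕ} (hM : 1 ≤ M) (hInv : Inv M b)
    (hm : b.length = 2) (h : RRpred M b 1) : b = [b.getD 0 0, M - b.getD 0 0 + 1] := by
  have hE := (rel_of_RRpred_one h).2
  rw [hm, (by norm_num : (2:ℕ) - 1 = 1), (by norm_num : (2:ℕ) - 2 = 0)] at hE
  have h0 := getD_le hInv.1 (show 0 < b.length by omega)
  have h1 := getD_le hInv.1 (show 1 < b.length by omega)
  have hne := hInv.2.2
  have hb1 : b.getD 1 0 = M - b.getD 0 0 + 1 := by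
    by_cases hz : b.getD 1 0 = 0
    · exact absurd ⟨by omega, hz⟩ hne
    · omega
  apply list_eq_of_getD
  · rw [hm]; rfl
  · intro k hk
    rw [hm] at hk
    interval_cases k
    · rfl
    · rw [List.getD_cons_succ, List.getD_cons_zero]
      exact hb1

private lemma RRpred_one_absurd {M : ℕ} {b : List ℕ} (hM : 1 ≤ M) (hInv : Inv M b)
    (hm : 3 ≤ b.length) (h : RRpred M b 1) : False := by
  obtain ⟨hRel, hE⟩ := rel_of_RRpred_one h
  set m := b.length with hmm
  have hfM : ∀ k, k < m → b.getD k 0 ≤ M := fun k hk => getD_le hInv.1 hk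
  have hsum : ∀ k, k < m - 2 → b.getD k 0 + b.getD (k+1) 0 = M := by
    intro k hk
    have hr := hRel k hk
    have hb := hfM k (by omega)
    omega
  by_cases hy : 1 ≤ b.getD (m-1) 0
  · have hs := hsum (m-3) (by omega)
    rw [show m - 3 + 1 = m - 2 by omega] at hs
    have hb2 := hfM (m-2) (by omega)
    have h3 : b.getD (m-1) 0 = b.getD (m-3) 0 + 1 := by omega
    have hle := hInv.2.1 2 (by omega)
    refine not_wordLe_of (b.drop 2) (b.take (m - 2))
      (by rw [List.length_drop, length_take_of_le (by omega)]) (m - 3)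
      (by rw [List.length_drop]; omega) ?_ ?_ hle
    · intro i hi
      rw [getD_drop, getD_take (by omega : i < m - 2)]
      have s1 := hsum i (by omega)
      have s2 := hsum (i+1) (by omega)
      rw [show 2 + i = i + 1 + 1 by omega]
      omega
    · rw [getD_drop, getD_take (by omega : m - 3 < m - 2),
        show 2 + (m - 3) = m - 1 by omega]
      omega
  · have hm2 : b.getD (m-2) 0 = M := by
      have := hfM (m-2) (by omega)
      omega
    have altd : ∀ j, j ≤ m - 2 → b.getD (m-2-j) 0 = if j % 2 = 0 then M else 0 := by
      intro j
      induction j with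
      | zero => intro _; simpa using hm2
      | succ j ih =>
        intro hj
        have hprev := ih (by omega)
        have hs := hsum (m-3-j) (by omega)
        rw [show m - 3 - j + 1 = m - 2 - j by omega] at hs
        rw [show m - 2 - (j+1) = m - 3 - j by omega]
        by_cases hp : j % 2 = 0
        · rw [if_pos hp] at hprev
          rw [if_neg (by omega)]
          omega
        · rw [if_neg hp] at hprev
          rw [if_pos (by omega)]
          omega
    have ha0 := altd (m-2) le_rfl
    have ha1 := altd (m-3) (by omega)
    rw [show m - 2 - (m-2) = 0 by omega] at ha0
    rw [show m - 2 - (m-3) = 1 by omega] at ha1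
    by_cases hpar : (m - 2) % 2 = 0
    · rw [if_pos hpar] at ha0
      rw [if_neg (by omega)] at ha1
      exact hInv.2.2 ⟨ha0, ha1⟩
    · rw [if_neg hpar] at ha0
      rw [if_pos (by omega)] at ha1
      have hle := hInv.2.1 1 (by omega)
      refine not_wordLe_of (b.drop 1) (b.take (m - 1))
        (by rw [List.length_drop, length_take_of_le (by omega)]) 0
        (by rw [List.length_drop]; omega) (by omega) ?_ hle
      rw [getD_drop, getD_take (by omega : (0:ℕ) < m - 1)]
      rw [show 1 + 0 = 1 by rfl]
      omega

private lemma RR_eq_self {M : ℕ} {b : List ℕ} (h : ¬ ∃ s, RRpred M b s) : RR M b = b := by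
  unfold RR
  rw [dif_neg h]

private lemma RR_eq_take {M : ℕ} {b : List ℕ} (h : ∃ s, RRpred M b s) :
    RR M b = b.take (Nat.find h) := by
  unfold RR
  rw [dif_pos h]

private lemma RRiter_shift {M : ℕ} {b : List ℕ} (k : ℕ) :
    RRiter M b (k+1) = RRiter M (RR M b) k := by
  induction k with
  | zero => rfl
  | succ k ih =>
    have h1 : RRiter M b (k+1+1) = RR M (RRiter M b (k+1)) := rfl
    have h2 : RRiter M (RR M b) (k+1) = RR M (RRiter M (RR M b) k) := rfl
    rw [h1, h2, ih]

private lemma key_lemma {M : ℕ} (hM : 1 ≤ M) :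
    ∀ n (b : List ℕ), Inv M b → 2 ≤ b.length → b.length ≤ n →
    ∃ j ≤ n, (RRiter M b (j + 1) = RRiter M b j ∧ 2 ≤ (RRiter M b j).length) ∨
      RRiter M b j = [b.getD 0 0, M - b.getD 0 0 + 1] := by
  intro n
  induction n with
  | zero => intro b _ h2 h0; omega
  | succ n ih =>
    intro b hInv hb2 hbn
    by_cases hex : ∃ s, RRpred M b s
    · have hspec := Nat.find_spec hex
      have hRR := RR_eq_take hex
      set s₀ := Nat.find hex with hs₀
      have hslt : s₀ < b.length := hspec.1
      have hs0 : s₀ ≠ 0 := by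
        intro hc
        exact not_RRpred_zero hM hInv.1 hb2 (hc ▸ hspec)
      by_cases hs1 : s₀ = 1
      · have hp1 : RRpred M b 1 := hs1 ▸ hspec
        by_cases hm2 : b.length = 2
        · exact ⟨0, by omega, Or.inr (RRpred_one_eq hM hInv hm2 hp1)⟩
        · exact absurd (RRpred_one_absurd hM hInv (by omega) hp1) (fun h => h)
      · have hs2 : 2 ≤ s₀ := by omega
        have hInv' := inv_take hInv hs2 (le_of_lt hslt)
        have hlen' : (b.take s₀).length = s₀ := length_take_of_le (le_of_lt hslt)
        obtain ⟨j, hj, hcase⟩ := ih (b.take s₀) hInv' (by omega) (by omega)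
        have hshift : ∀ k, RRiter M b (k+1) = RRiter M (b.take s₀) k := by
          intro k
          rw [RRiter_shift, hRR]
        refine ⟨j + 1, by omega, ?_⟩
        rcases hcase with ⟨he, hl⟩ | hr
        · exact Or.inl ⟨by rw [hshift (j+1), hshift j]; exact he, by rw [hshift j]; exact hl⟩
        · refine Or.inr ?_
          rw [hshift j, hr, getD_take (l := b) (show 0 < s₀ by omega)]
    · refine ⟨0, by omega, Or.inl ⟨?_, hb2⟩⟩
      have h1 : RRiter M b 1 = RR M b := rfl
      rw [h1, RR_eq_self hex]
      rfl

end Statement11Aux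

/-- For a primitive word `a = a_1…a_m` with `m ≥ 2` there exists
`j ∈ {0,…,m}` such that either `R^{j+1}(a) = R^j(a)` with `|R^j(a)| ≥ 2`, or
`R^j(a) = a_1 \overline{a_1}⁺`. -/
theorem statement11 (M : ℕ) (hM : 1 ≤ M) (a : List ℕ) (hlen : 2 ≤ a.length)
    (hprim : PrimitiveWord M a) :
    ∃ j ≤ a.length, (RRiter M a (j + 1) = RRiter M a j ∧ 2 ≤ (RRiter M a j).length) ∨
      RRiter M a j = [a.getD 0 0, M - a.getD 0 0 + 1] := by
  exact key_lemma hM a.length a (prim_inv hM hprim hlen) hlen le_rfl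

end Paper
end
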